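/- (Main FLInt correctness theorem) For any two k-bit vectors X, Y: FP(X) ≥ FP(Y) holds if and only if (SI(X) ≥ SI(Y)) XOR (SI(X) < 0 ∧ SI(Y) < 0 ∧ SI(X) ≠ SI(Y)). The ≥ comparison of floating point numbers can thus be computed purely using two's complement integer comparisons and one XOR. -/

import Mathlib

/-- Unsigned integer interpretation of a bit vector. -/
def UI {k : ℕ} (B : Fin k → Bool) : ℕ :=
  ∑ i : Fin k, if B i then 2 ^ (i : ℕ) else 0

/-- Two's complement (signed integer) interpretation of a (k+1)-bit vector. -/
def SI {k : ℕ} (B : Fin (k + 1) → Bool) : ℤ :=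
  if B (Fin.last k) then
    -2 ^ k + ∑ i : Fin k, (if B i.castSucc then (2 : ℤ) ^ (i : ℕ) else 0)
  else (UI B : ℤ)

/-- Sign bit of a floating point bit vector of length x + j + 1. -/
def signBit (j x : ℕ) (B : Fin (x + j + 1) → Bool) : Bool := B (Fin.last (x + j))

/-- Unsigned value of the exponent field. -/
def expo (j x : ℕ) (B : Fin (x + j + 1) → Bool) : ℕ :=
  ∑ i : Fin j, if B ⟨x + (i : ℕ), by have := i.isLt; omega⟩ then 2 ^ (i : ℕ) else 0

/-- Unsigned value of the mantissa field. -/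
def mant (j x : ℕ) (B : Fin (x + j + 1) → Bool) : ℕ :=
  ∑ i : Fin x, if B ⟨(i : ℕ), by have := i.isLt; omega⟩ then 2 ^ (i : ℕ) else 0

/-- The exponent bias 2^(j-1) - 1. -/
def bias (j : ℕ) : ℤ := 2 ^ (j - 1) - 1

/-- Floating point magnitude (normalized if exponent field nonzero, else denormalized). -/
def mag (j x : ℕ) (B : Fin (x + j + 1) → Bool) : ℚ :=
  if expo j x B = 0 then
    (2 : ℚ) ^ ((1 : ℤ) - bias j) * (mant j x B) * (2 : ℚ) ^ (-(x : ℤ))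
  else
    (2 : ℚ) ^ ((expo j x B : ℤ) - bias j) * (1 + (mant j x B) * (2 : ℚ) ^ (-(x : ℤ)))

/-- Floating point interpretation, as a signed-magnitude value: the sign is paired
(lexicographically) with the (sign-adjusted) magnitude, so that -0 < +0. -/
def FP (j x : ℕ) (B : Fin (x + j + 1) → Bool) : ℤ ×ₗ ℚ :=
  toLex (if signBit j x B then ((0 : ℤ), -(mag j x B)) else ((1 : ℤ), mag j x B))

/-- The floating point value +0. -/
def fpZero : ℤ ×ₗ ℚ := toLex ((1 : ℤ), (0 : ℚ))

/-- Mask with only the most significant bit set. -/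
def mask (k : ℕ) : Fin (k + 1) → Bool := fun i => decide (i = Fin.last k)

/-- Bitwise XOR of two bit vectors. -/
def xorVec {k : ℕ} (X Y : Fin k → Bool) : Fin k → Bool := fun i => xor (X i) (Y i)

/-- Negation of a floating point value: swap the sign, keep the magnitude. -/
def fpNeg (p : ℤ ×ₗ ℚ) : ℤ ×ₗ ℚ := toLex (1 - (ofLex p).1, -(ofLex p).2)

lemma sum_range_two_pow (k : ℕ) : ∑ i ∈ Finset.range k, 2 ^ i = 2 ^ k - 1 := by
  induction k with
  | zero => simp
  | succ n ih => rw [Finset.sum_range_succ, ih]; have := Nat.one_le_two_pow (n := n); omega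

lemma UI_lt {k : ℕ} (B : Fin k → Bool) : UI B < 2 ^ k := by
  have h1 : UI B ≤ ∑ i : Fin k, 2 ^ (i : ℕ) :=
    Finset.sum_le_sum (fun i _ => by split <;> simp)
  have h2 : ∑ i : Fin k, 2 ^ (i : ℕ) = 2 ^ k - 1 := by
    rw [Fin.sum_univ_eq_sum_range]; exact sum_range_two_pow k
  have := Nat.one_le_two_pow (n := k)
  omega

def Lo {k : ℕ} (B : Fin (k + 1) → Bool) : ℕ := UI (fun i : Fin k => B i.castSucc)

lemma SI_eq {k : ℕ} (B : Fin (k + 1) → Bool) :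
    SI B = (if B (Fin.last k) then -(2 ^ k : ℤ) else 0) + (Lo B : ℤ) := by
  unfold SI Lo UI
  split
  · push_cast [apply_ite (Nat.cast : ℕ → ℤ)]
    ring
  · rw [Fin.sum_univ_castSucc]
    simp [*]

lemma mant_lt (j x : ℕ) (B : Fin (x + j + 1) → Bool) : mant j x B < 2 ^ x :=
  UI_lt (fun i : Fin x => B ⟨(i : ℕ), by have := i.isLt; omega⟩)

lemma expo_lt (j x : ℕ) (B : Fin (x + j + 1) → Bool) : expo j x B < 2 ^ j :=
  UI_lt (fun i : Fin j => B ⟨x + (i : ℕ), by have := i.isLt; omega⟩)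

lemma Lo_eq (j x : ℕ) (B : Fin (x + j + 1) → Bool) :
    Lo B = mant j x B + expo j x B * 2 ^ x := by
  unfold Lo UI mant expo
  rw [Fin.sum_univ_add]
  congr 1
  · rw [Finset.sum_mul]
    apply Finset.sum_congr rfl
    intro i _
    show (if B ⟨x + (i:ℕ), by have := i.isLt; omega⟩ then 2 ^ ((Fin.natAdd x i : Fin (x+j)) : ℕ) else 0) = _
    split <;> simp [Fin.natAdd, pow_add, mul_comm]

lemma two_zpow_pos (a : ℤ) : (0:ℚ) < 2 ^ a := zpow_pos (by norm_num) a

lemma mant_frac_lt_one (j x : ℕ) (B : Fin (x + j + 1) → Bool) :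
    (mant j x B : ℚ) * (2:ℚ) ^ (-(x:ℤ)) < 1 := by
  have hm : (mant j x B : ℚ) < 2 ^ x := by exact_mod_cast mant_lt j x B
  have h2 := two_zpow_pos (-(x:ℤ))
  calc (mant j x B : ℚ) * (2:ℚ) ^ (-(x:ℤ)) < (2:ℚ) ^ x * (2:ℚ) ^ (-(x:ℤ)) :=
        mul_lt_mul_of_pos_right hm h2
    _ = 1 := by
        rw [← zpow_natCast, ← zpow_add₀ (by norm_num : (2:ℚ) ≠ 0)]
        simp

lemma mant_frac_nonneg (j x : ℕ) (B : Fin (x + j + 1) → Bool) :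
    (0:ℚ) ≤ (mant j x B : ℚ) * (2:ℚ) ^ (-(x:ℤ)) :=
  mul_nonneg (by positivity) (le_of_lt (two_zpow_pos _))

lemma mag_lt_of_expo_lt (j x : ℕ) (B C : Fin (x + j + 1) → Bool)
    (h : expo j x B < expo j x C) : mag j x B < mag j x C := by
  have hC : expo j x C ≠ 0 := by omega
  have h1 : mag j x B < (2:ℚ) ^ ((expo j x B : ℤ) + 1 - bias j) := by
    unfold mag
    split
    · rename_i h0
      rw [h0, mul_assoc]
      calc (2:ℚ) ^ ((1:ℤ) - bias j) * ((mant j x B : ℚ) * (2:ℚ) ^ (-(x:ℤ)))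
          < (2:ℚ) ^ ((1:ℤ) - bias j) * 1 :=
            mul_lt_mul_of_pos_left (mant_frac_lt_one j x B) (two_zpow_pos _)
        _ = (2:ℚ) ^ ((0:ℤ) + 1 - bias j) := by rw [mul_one]; norm_num
    · calc (2:ℚ) ^ ((expo j x B : ℤ) - bias j) * (1 + (mant j x B : ℚ) * (2:ℚ) ^ (-(x:ℤ)))
          < (2:ℚ) ^ ((expo j x B : ℤ) - bias j) * 2 := by
            have := mant_frac_lt_one j x B
            have := two_zpow_pos ((expo j x B : ℤ) - bias j)
            nlinarith
        _ = (2:ℚ) ^ ((expo j x B : ℤ) + 1 - bias j) := by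
            rw [show (expo j x B : ℤ) + 1 - bias j = ((expo j x B : ℤ) - bias j) + 1 by ring,
              zpow_add₀ (by norm_num : (2:ℚ) ≠ 0)]
            norm_num
  have h2 : (2:ℚ) ^ ((expo j x C : ℤ) - bias j) ≤ mag j x C := by
    unfold mag
    rw [if_neg hC]
    nlinarith [mant_frac_nonneg j x C, two_zpow_pos ((expo j x C : ℤ) - bias j)]
  have h3 : (2:ℚ) ^ ((expo j x B : ℤ) + 1 - bias j) ≤ (2:ℚ) ^ ((expo j x C : ℤ) - bias j) := by
    apply zpow_le_zpow_right₀ (by norm_num : (1:ℚ) ≤ 2)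
    omega
  linarith

lemma mag_lt_iff_of_expo_eq (j x : ℕ) (B C : Fin (x + j + 1) → Bool)
    (h : expo j x B = expo j x C) :
    (mag j x B < mag j x C ↔ mant j x B < mant j x C) := by
  unfold mag
  rw [h]
  have hmm : ((mant j x B : ℚ) < (mant j x C : ℚ)) ↔ mant j x B < mant j x C := by
    exact_mod_cast Iff.rfl
  split
  · rw [mul_assoc, mul_assoc]
    rw [mul_lt_mul_iff_right₀ (two_zpow_pos _), mul_lt_mul_iff_left₀ (two_zpow_pos _)]
    exact hmm
  · rw [mul_lt_mul_iff_right₀ (two_zpow_pos _), add_lt_add_iff_left,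
      mul_lt_mul_iff_left₀ (two_zpow_pos _)]
    exact hmm

lemma mag_lt_iff (j x : ℕ) (B C : Fin (x + j + 1) → Bool) :
    mag j x B < mag j x C ↔ Lo B < Lo C := by
  rw [Lo_eq j x B, Lo_eq j x C]
  rcases lt_trichotomy (expo j x B) (expo j x C) with h | h | h
  · have hmg := mag_lt_of_expo_lt j x B C h
    have := mant_lt j x B
    constructor
    · intro _; nlinarith
    · intro _; exact hmg
  · rw [mag_lt_iff_of_expo_eq j x B C h, h]
    have := mant_lt j x B
    have := mant_lt j x C
    constructor <;> intro <;> nlinarith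
  · have h1 := mag_lt_of_expo_lt j x C B h
    have := mant_lt j x C
    constructor
    · intro h2; linarith
    · intro _; nlinarith

lemma mag_le_iff (j x : ℕ) (B C : Fin (x + j + 1) → Bool) :
    mag j x B ≤ mag j x C ↔ Lo B ≤ Lo C := by
  rw [← not_lt, ← not_lt, not_iff_not, mag_lt_iff]

/-- Main FLInt correctness theorem: FP(X) ≥ FP(Y) iff
(SI(X) ≥ SI(Y)) XOR (SI(X) < 0 ∧ SI(Y) < 0 ∧ SI(X) ≠ SI(Y)). -/
theorem flint_correct (j x : ℕ) (hj : 1 ≤ j) (X Y : Fin (x + j + 1) → Bool) :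
    FP j x X ≥ FP j x Y ↔
      Xor' (SI X ≥ SI Y) (SI X < 0 ∧ SI Y < 0 ∧ SI X ≠ SI Y) := by
  have hLX : (Lo X : ℤ) < 2 ^ (x + j) := by exact_mod_cast UI_lt _
  have hLY : (Lo Y : ℤ) < 2 ^ (x + j) := by exact_mod_cast UI_lt _
  have hSX := SI_eq X
  have hSY := SI_eq Y
  rw [ge_iff_le]
  unfold FP signBit
  cases hx : X (Fin.last (x + j)) <;> cases hy : Y (Fin.last (x + j)) <;>
    simp only [hx, hy, if_true, if_false, Bool.false_eq_true, ite_true, ite_false] at hSX hSY ⊢ <;>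
    rw [Prod.Lex.le_iff] <;>
    simp only [Xor', Xor, ge_iff_le] <;>
    norm_num
  · -- both signs false (nonnegative)
    rw [mag_le_iff, hSX, hSY]
    push_cast
    omega
  · -- X nonneg, Y neg
    rw [hSX, hSY]
    push_cast at *
    omega
  · -- X neg, Y nonneg
    rw [hSX, hSY]
    push_cast at *
    omega
  · -- both neg
    rw [mag_le_iff, hSX, hSY]
    push_cast at *
    omega
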